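/- For each i ∈ {0, …, n}, let c_i ∈ ℚ[G_{r,n}] be the coefficient of x^i when Σ_{π ∈ G_{r,n}} b((x − 1)/r − des(π))·π is expanded as a polynomial of degree at most n in the variable x with coefficients in ℚ[G_{r,n}], where b(z) = (1/n!)·∏_{m=1}^{n} (z + m). Then the c_i are pairwise orthogonal idempotents: c_i·c_j = 0 for all i ≠ j, and c_i·c_i = c_i for all i ∈ {0, …, n}. -/

import Mathlib

open scoped BigOperators

/-- Lexicographic (color-first) strict order on colored letters `(value, color)`. -/
def letterLT (x y : ℕ × ℕ) : Prop :=
  x.2 < y.2 ∨ (x.2 = y.2 ∧ x.1 < y.1)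

instance : DecidableRel letterLT := fun x y => by
  unfold letterLT; infer_instance

/-- The colored permutation group `G_{r,n}`. -/
@[ext] structure ColoredPerm (r n : ℕ) where
  perm : Equiv.Perm (Fin n)
  col : Fin n → ZMod r

namespace ColoredPerm

variable {r n : ℕ}

instance : Mul (ColoredPerm r n) :=
  ⟨fun a b => ⟨a.perm * b.perm, fun i => a.col (b.perm i) + b.col i⟩⟩

instance : One (ColoredPerm r n) :=
  ⟨⟨1, fun _ => 0⟩⟩

instance : Inv (ColoredPerm r n) :=
  ⟨fun a => ⟨a.perm⁻¹, fun i => -a.col (a.perm⁻¹ i)⟩⟩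

instance : Group (ColoredPerm r n) where
  mul_assoc a b c := by
    refine ColoredPerm.ext (mul_assoc _ _ _) ?_
    funext i
    show a.col (b.perm (c.perm i)) + b.col (c.perm i) + c.col i
        = a.col ((b.perm * c.perm) i) + (b.col (c.perm i) + c.col i)
    rw [Equiv.Perm.mul_apply, add_assoc]
  one_mul a := by
    refine ColoredPerm.ext (one_mul _) ?_
    funext i
    show (0 : ZMod r) + a.col i = a.col i
    rw [zero_add]
  mul_one a := by
    refine ColoredPerm.ext (mul_one _) ?_
    funext i
    show a.col ((1 : Equiv.Perm (Fin n)) i) + 0 = a.col i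
    simp
  inv_mul_cancel a := by
    refine ColoredPerm.ext (inv_mul_cancel _) ?_
    funext i
    show -a.col (a.perm⁻¹ (a.perm i)) + a.col i = 0
    simp

/-- `ColoredPerm r n` is equivalent (as a type) to a product. -/
def toProd : ColoredPerm r n ≃ Equiv.Perm (Fin n) × (Fin n → ZMod r) where
  toFun a := (a.perm, a.col)
  invFun p := ⟨p.1, p.2⟩
  left_inv _ := rfl
  right_inv _ := rfl

instance [NeZero r] : Fintype (ColoredPerm r n) := Fintype.ofEquiv _ toProd.symm

instance : DecidableEq (ColoredPerm r n) := toProd.decidableEq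

/-- The `i`-th letter of the one-line notation (0-indexed), as a pair (value, color);
for `i = n` this is the sentinel letter `0₁`. Values are in `{1, …, n}`. -/
def letterAt (a : ColoredPerm r n) (i : ℕ) : ℕ × ℕ :=
  if h : i < n then ((a.perm ⟨i, h⟩ : ℕ) + 1, (a.col ⟨i, h⟩).val) else (0, 1)

/-- The descent set of a colored permutation (positions 0-indexed: position `i`
corresponds to the paper's `i+1 ∈ {1, …, n}`). -/
def Des (a : ColoredPerm r n) : Finset (Fin n) :=
  Finset.univ.filter fun i : Fin n => letterLT (letterAt a (i.1 + 1)) (letterAt a i.1)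

/-- The descent number. -/
def des (a : ColoredPerm r n) : ℕ := (Des a).card

/-- The internal descent number `|Des(π) ∩ {1, …, n−1}|`. -/
def intdes (a : ColoredPerm r n) : ℕ :=
  ((Des a).filter fun i : Fin n => i.1 + 1 < n).card

end ColoredPerm

open ColoredPerm

/-- The polynomial (in the variable `x`, over `ℚ`)
`b((x − 1)/r − d) = (1/n!) ∏_{m=1}^{n} ((x − 1)/r − d + m)`. -/
noncomputable def idemPoly (r n : ℕ) (d : ℕ) : Polynomial ℚ :=
  Polynomial.C ((n.factorial : ℚ))⁻¹ *
    ∏ m ∈ Finset.Icc 1 n,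
      (Polynomial.C ((r : ℚ))⁻¹ * (Polynomial.X - 1) -
        Polynomial.C (d : ℚ) + Polynomial.C (m : ℚ))

/-- `c_i`: the coefficient of `x^i` in `Σ_{π ∈ G_{r,n}} b((x−1)/r − des(π))·π`,
viewed as an element of the group algebra `ℚ[G_{r,n}]`. -/
noncomputable def eulerianIdem (r n : ℕ) [NeZero r] (i : ℕ) :
    MonoidAlgebra ℚ (ColoredPerm r n) :=
  ∑ π : ColoredPerm r n,
    (idemPoly r n (des π)).coeff i • MonoidAlgebra.of ℚ (ColoredPerm r n) π

/-!
For `x = r p + 1` the sum `S(x) = ∑_π b((x - 1)/r - des π) π` equals `∑_π C(p + n - des π, n) π`,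
and this is the sum of the standardizations `std F` of all words `F : [n] → {0, …, r p}`: a letter
`a` is read with color `a mod r`, and `std F` sorts the positions stably. Indeed the words with
`std F = π` are in bijection with the strictly increasing maps `[n] → [p + n - des π]`, through
`j ↦ ⌊F (π j) / r⌋ + j - #{descents of π before j}`.
Merging a word over `N` letters with one over `M` letters into a word over `M N` letters commutes
with `std` as soon as `N ≡ 1 mod r`; hence `S(x) S(y) = S(x y)` for infinitely many `x, y`.
Expanding `S(x) = ∑_k x^k c_k` and comparing coefficients, twice, gives `c_i c_j = δ_ij c_j`.
-/

open Finset Polynomial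

theorem Fin.strictMono_iff_lt_of_val_add_one_eq {α : Type*} [Preorder α] {n : ℕ}
    {f : Fin n → α} : StrictMono f ↔ ∀ i j : Fin n, i.val + 1 = j.val → f i < f j := by
  rcases n with _ | n
  · exact ⟨fun _ i => i.elim0, fun _ i => i.elim0⟩
  rw [Fin.strictMono_iff_lt_succ]
  refine ⟨fun h i j hij => ?_, fun h i => h _ _ rfl⟩
  have hi : i.val < n := by omega
  convert h ⟨i, hi⟩ using 2 <;> ext <;> simp [hij]

theorem Fin.val_le_of_strictMono {n : ℕ} {f : Fin n → ℕ} (hf : StrictMono f) (i : Fin n) :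
    (i : ℕ) ≤ f i := by
  obtain ⟨i, hi⟩ := i
  induction i with
  | zero => exact Nat.zero_le _
  | succ k ih =>
    exact (ih (by omega)).trans_lt (hf (show (⟨k, by omega⟩ : Fin n) < ⟨k + 1, hi⟩ from
      Nat.lt_succ_self k))

theorem Nat.add_mul_lt_add_mul_iff {N a a' b b' : ℕ} (ha : a < N) (ha' : a' < N) :
    a + N * b < a' + N * b' ↔ b < b' ∨ b = b' ∧ a < a' := by
  constructor
  · intro h
    rcases lt_trichotomy b b' with hb | rfl | hb
    · exact Or.inl hb
    · exact Or.inr ⟨rfl, by omega⟩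
    · have := Nat.mul_le_mul_left N (Nat.succ_le_of_lt hb)
      rw [Nat.mul_succ] at this
      omega
  · rintro (hb | ⟨rfl, h⟩)
    · have := Nat.mul_le_mul_left N (Nat.succ_le_of_lt hb)
      rw [Nat.mul_succ] at this
      omega
    · omega

theorem Prod.Lex.toLex_add_mul_lt_toLex_add_mul_iff {α : Type*} [LinearOrder α] {r s s' a a' : ℕ}
    (hs : s < r) (hs' : s' < r) {x x' : α} (hx : x ≠ x') :
    toLex (s + r * a, x) < toLex (s' + r * a', x') ↔
      a + (if toLex (s', x') < toLex (s, x) then 1 else 0) ≤ a' := by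
  have heq : s + r * a = s' + r * a' ↔ a = a' ∧ s = s' := by
    constructor
    · intro h
      have h1 := (Nat.add_mul_lt_add_mul_iff hs hs').not.mp h.not_lt
      have h2 := (Nat.add_mul_lt_add_mul_iff hs' hs).not.mp h.symm.not_lt
      omega
    · rintro ⟨rfl, rfl⟩; rfl
  simp only [Prod.Lex.toLex_lt_toLex, Nat.add_mul_lt_add_mul_iff hs hs', heq]
  rcases lt_or_gt_of_ne hx with h | h <;>
    simp only [h, lt_asymm h, and_true, and_false, or_false] <;> split_ifs <;> omega

theorem Nat.add_mul_le_mul_iff {r s a p : ℕ} (hs : s < r) :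
    s + r * a ≤ r * p ↔ a + (if s = 0 then 0 else 1) ≤ p := by
  split_ifs with h
  · subst h
    rw [zero_add, add_zero, Nat.mul_le_mul_left_iff (by omega)]
  · constructor
    · intro hle
      by_contra hlt
      have := Nat.mul_le_mul_left r (show p ≤ a by omega)
      omega
    · intro hle
      have := Nat.mul_le_mul_left r hle
      rw [Nat.mul_succ] at this
      omega

theorem Tuple.eq_sort_iff_strictMono_lex {α : Type*} [LinearOrder α] {n : ℕ} {f : Fin n → α}
    {σ : Equiv.Perm (Fin n)} : σ = Tuple.sort f ↔ StrictMono fun i => toLex (f (σ i), σ i) :=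
  Tuple.eq_sort_iff'

theorem prod_Icc_sub_add_eq_prod_range {R : Type*} [CommRing R] (z : R) (n : ℕ) :
    ∏ m ∈ Icc 1 n, (z - n + m) = ∏ j ∈ range n, (z - j) := by
  refine prod_nbij' (n - ·) (n - ·) ?_ ?_ ?_ ?_ fun m hm => ?_
  any_goals intro m hm; simp only [mem_Icc, mem_range] at hm ⊢; omega
  rw [Nat.cast_sub (mem_Icc.mp hm).2]
  ring

section PowerSums

variable {K : Type*} [Field K]

theorem eq_zero_of_forall_sum_pow_smul_eq_zero {V : Type*} [AddCommGroup V] [Module K V]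
    {T : Set K} (hT : T.Infinite) {m : ℕ} {v : ℕ → V}
    (h : ∀ x ∈ T, ∑ k ∈ range m, x ^ k • v k = 0) {k : ℕ} (hk : k < m) : v k = 0 := by
  refine (Module.forall_dual_apply_eq_zero_iff K (v k)).mp fun φ => ?_
  set f : K[X] := ∑ i ∈ range m, C (φ (v i)) * X ^ i
  have hroots : T ⊆ {x | f.IsRoot x} := fun x hx => by
    have := congrArg φ (h x hx)
    simp only [map_sum, map_smul, smul_eq_mul, map_zero] at this
    simp only [Set.mem_ofPred_eq, IsRoot, f, eval_finsetSum, eval_mul, eval_C, eval_pow, eval_X]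
    rw [← this]
    exact sum_congr rfl fun i _ => mul_comm _ _
  have hf : f = 0 := eq_zero_of_infinite_isRoot f (hT.mono hroots)
  simpa [f, coeff_X_pow, hk] using congrArg (coeff · k) hf

theorem orthogonalIdempotents_of_sum_pow_smul_mul {A : Type*} [Ring A] [Algebra K A]
    {T : Set K} (hT : T.Infinite) {m : ℕ} {c : ℕ → A}
    (h : ∀ x ∈ T, ∀ y ∈ T, (∑ k ∈ range m, x ^ k • c k) * (∑ k ∈ range m, y ^ k • c k) =
      ∑ k ∈ range m, (x * y) ^ k • c k) :
    OrthogonalIdempotents fun i : Fin m => c i := by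
  have hright : ∀ x ∈ T, ∀ j < m, (∑ k ∈ range m, x ^ k • c k) * c j = x ^ j • c j := by
    intro x hx j hj
    refine sub_eq_zero.mp (eq_zero_of_forall_sum_pow_smul_eq_zero (v := fun k =>
      (∑ k ∈ range m, x ^ k • c k) * c k - x ^ k • c k) hT (fun y hy => ?_) hj)
    simp_rw [smul_sub, sum_sub_distrib, ← mul_smul_comm, ← mul_sum, smul_smul, ← mul_pow,
      mul_comm y x]
    exact sub_eq_zero.mpr (h x hx y hy)
  have hmul : ∀ i < m, ∀ j < m, c i * c j = if i = j then c j else 0 := by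
    intro i hi j hj
    refine sub_eq_zero.mp (eq_zero_of_forall_sum_pow_smul_eq_zero (v := fun i =>
      c i * c j - if i = j then c j else 0) hT (fun x hx => ?_) hi)
    simp_rw [smul_sub, sum_sub_distrib, ← smul_mul_assoc, ← sum_mul, smul_ite, smul_zero,
      sum_ite_eq', mem_range, if_pos hj]
    exact sub_eq_zero.mpr (hright x hx j hj)
  refine ⟨fun i => ?_, fun i j hij => ?_⟩
  · simpa [IsIdempotentElem] using hmul i i.2 i i.2
  · simpa [Fin.val_ne_of_ne hij] using hmul i i.2 j j.2

end PowerSums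

namespace ColoredPerm

def std (r : ℕ) {n N : ℕ} (F : Fin n → Fin N) : ColoredPerm r n :=
  ⟨Tuple.sort F, fun j => ((F (Tuple.sort F j) : ℕ) : ZMod r)⟩

variable {r n : ℕ}

theorem std_eq_iff {N : ℕ} (F : Fin n → Fin N) (π : ColoredPerm r n) :
    std r F = π ↔ StrictMono (fun j => toLex ((F (π.perm j) : ℕ), π.perm j)) ∧
      ∀ j, ((F (π.perm j) : ℕ) : ZMod r) = π.col j := by
  have hval : StrictMono (fun j => toLex ((F (π.perm j) : ℕ), π.perm j)) ↔
      StrictMono (fun j => toLex (F (π.perm j), π.perm j)) := by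
    simp only [StrictMono, Prod.Lex.toLex_lt_toLex, Fin.lt_def, Fin.val_inj]
  rw [hval, ← Tuple.eq_sort_iff_strictMono_lex]
  constructor
  · rintro rfl
    exact ⟨rfl, fun _ => rfl⟩
  · obtain ⟨σ, c⟩ := π
    rintro ⟨rfl, hcol⟩
    exact ColoredPerm.ext rfl (funext hcol)

theorem std_mul {N M : ℕ} (hN : (N : ZMod r) = 1) (F : Fin n → Fin N) (G : Fin n → Fin M) :
    std r (fun v => finProdFinEquiv (G ((Tuple.sort F)⁻¹ v), F v)) = std r F * std r G := by
  set σ := Tuple.sort F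
  set τ := Tuple.sort G
  have hσ : StrictMono fun i => toLex ((F (σ i) : ℕ), σ i) := ((std_eq_iff F (std r F)).mp rfl).1
  have hτ : StrictMono fun i => toLex ((G (τ i) : ℕ), τ i) := ((std_eq_iff G (std r G)).mp rfl).1
  set H : Fin n → Fin (M * N) := fun v => finProdFinEquiv (G (σ⁻¹ v), F v)
  have hH : ∀ j, (H (σ (τ j)) : ℕ) = F (σ (τ j)) + N * G (τ j) := fun j => by
    simp [H, finProdFinEquiv]
  refine (std_eq_iff H _).mpr ⟨?_, fun j => ?_⟩
  · show StrictMono fun j => toLex ((H (σ (τ j)) : ℕ), σ (τ j))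
    intro i j hij
    rw [Prod.Lex.toLex_lt_toLex]
    dsimp only
    rw [hH, hH, Nat.add_mul_lt_add_mul_iff (F _).2 (F _).2]
    rcases Prod.Lex.toLex_lt_toLex.mp (hτ hij) with hG | ⟨hG, hτij⟩
    · exact Or.inl (Or.inl hG)
    rcases Prod.Lex.toLex_lt_toLex.mp (hσ hτij) with hF | ⟨hF, hσij⟩
    · exact Or.inl (Or.inr ⟨hG, hF⟩)
    · exact Or.inr ⟨by dsimp only at hF hG; rw [hF, hG], hσij⟩
  · show ((H (σ (τ j)) : ℕ) : ZMod r) = ((F (σ (τ j)) : ℕ) : ZMod r) + ((G (τ j) : ℕ) : ZMod r)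
    rw [hH]
    push_cast
    rw [hN, one_mul]

-- `(F, G) ↦ fun v => F v + N * G ((Tuple.sort F)⁻¹ v)`
def wordPairEquiv (n N M : ℕ) :
    (Fin n → Fin N) × (Fin n → Fin M) ≃ (Fin n → Fin (M * N)) :=
  (Equiv.prodShear (Equiv.refl _) fun F => Equiv.arrowCongr (Tuple.sort F) (Equiv.refl _)).trans <|
    (Equiv.prodComm _ _).trans <|
      (Equiv.arrowProdEquivProdArrow _ _ _).symm.trans <|
        Equiv.arrowCongr (Equiv.refl _) finProdFinEquiv

noncomputable def wordSum (r n N : ℕ) : MonoidAlgebra ℚ (ColoredPerm r n) :=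
  ∑ F : Fin n → Fin N, MonoidAlgebra.of ℚ _ (std r F)

theorem wordSum_mul {N M : ℕ} (hN : (N : ZMod r) = 1) :
    wordSum r n N * wordSum r n M = wordSum r n (M * N) := by
  rw [wordSum, wordSum, sum_mul_sum, ← Fintype.sum_prod_type']
  refine Fintype.sum_equiv (wordPairEquiv n N M) _ _ fun FG => ?_
  rw [← map_mul, ← std_mul hN]
  rfl

theorem des_le (π : ColoredPerm r n) : des π ≤ n :=
  (card_le_univ (Des π)).trans_eq (Fintype.card_fin n)

section Descents

variable (π : ColoredPerm r n)

def desBefore (j : ℕ) : ℕ := #{i ∈ Des π | i.val < j}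

theorem desBefore_le (j : ℕ) : desBefore π j ≤ j :=
  calc desBefore π j ≤ #(range j) :=
        card_le_card_of_injOn (↑) (fun i hi => by simpa using (mem_filter.mp hi).2)
          Fin.val_injective.injOn
    _ = j := card_range j

theorem desBefore_succ (i : Fin n) :
    desBefore π (i + 1) = desBefore π i + if i ∈ Des π then 1 else 0 := by
  simp only [desBefore, card_filter, ← sum_ite_eq' (Des π) i fun _ => 1, ← sum_add_distrib]
  refine sum_congr rfl fun k _ => ?_
  split_ifs <;> simp_all [Fin.ext_iff] <;> omega

theorem desBefore_of_le {j : ℕ} (h : n ≤ j) : desBefore π j = des π :=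
  congrArg card (filter_true_of_mem fun i _ => i.2.trans_le h)

theorem mem_Des_iff_of_val_add_one_eq {i j : Fin n} (h : (i : ℕ) + 1 = j) :
    i ∈ Des π ↔ toLex ((π.col j).val, π.perm j) < toLex ((π.col i).val, π.perm i) := by
  have hj : (i : ℕ) + 1 < n := h ▸ j.2
  rw [Des, mem_filter, letterAt, letterAt, dif_pos hj, dif_pos i.2,
    show (⟨i + 1, hj⟩ : Fin n) = j from Fin.ext h]
  simp only [mem_univ, true_and, letterLT, Prod.Lex.toLex_lt_toLex, Fin.lt_def, Fin.eta]
  omega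

theorem mem_Des_iff_of_val_add_one_eq_self {i : Fin n} (h : (i : ℕ) + 1 = n) :
    i ∈ Des π ↔ π.col i ≠ 0 := by
  rw [Des, mem_filter, letterAt, letterAt, dif_neg (by omega), dif_pos i.2, ← ZMod.val_ne_zero]
  simp only [mem_univ, true_and, letterLT, Fin.eta]
  omega

def height (u : Fin n → ℕ) (j : Fin n) : ℕ := u j / r + j - desBefore π j

variable {π} {u : Fin n → ℕ}

theorem eq_col_val_add_mul (hu : ∀ j, u j % r = (π.col j).val) (j : Fin n) :
    u j = (π.col j).val + r * (u j / r) := by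
  rw [← hu]
  exact (Nat.mod_add_div _ _).symm

variable (π) in
def wordOfHeight (e : Fin n → ℕ) (j : Fin n) : ℕ :=
  (π.col j).val + r * (e j + desBefore π j - j)

theorem wordOfHeight_height (hu : ∀ j, u j % r = (π.col j).val) :
    wordOfHeight π (height π u) = u := by
  funext j
  rw [wordOfHeight, height, ← hu j]
  have := desBefore_le π j
  conv_rhs => rw [← Nat.mod_add_div (u j) r]
  congr 2
  generalize u j / r = a
  omega

variable [NeZero r]

theorem toLex_lt_toLex_iff_height_lt (hu : ∀ j, u j % r = (π.col j).val) {i j : Fin n}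
    (h : (i : ℕ) + 1 = j) :
    toLex (u i, π.perm i) < toLex (u j, π.perm j) ↔ height π u i < height π u j := by
  have hne : π.perm i ≠ π.perm j := π.perm.injective.ne (Fin.ne_of_val_ne (by omega))
  rw [eq_col_val_add_mul hu i, eq_col_val_add_mul hu j,
    Prod.Lex.toLex_add_mul_lt_toLex_add_mul_iff (ZMod.val_lt _) (ZMod.val_lt _) hne]
  simp only [← mem_Des_iff_of_val_add_one_eq π h, height, ← h, desBefore_succ]
  have := desBefore_le π i
  generalize u i / r = a, u j / r = b
  split_ifs <;> omega

theorem le_mul_iff_height_lt (hu : ∀ j, u j % r = (π.col j).val) {i : Fin n}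
    (h : (i : ℕ) + 1 = n) (p : ℕ) :
    u i ≤ r * p ↔ height π u i < p + n - des π := by
  have hcol : (π.col i).val = 0 ↔ i ∉ Des π := by
    rw [mem_Des_iff_of_val_add_one_eq_self π h, not_not, ZMod.val_eq_zero]
  rw [eq_col_val_add_mul hu i, Nat.add_mul_le_mul_iff (ZMod.val_lt _)]
  simp only [hcol, height, ← desBefore_of_le π h.ge, ← h, desBefore_succ]
  have := desBefore_le π i
  generalize u i / r = a
  split_ifs <;> omega

theorem strictMono_toLex_and_le_mul_iff (hu : ∀ j, u j % r = (π.col j).val) (p : ℕ) :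
    (StrictMono (fun j => toLex (u j, π.perm j)) ∧ ∀ j, u j ≤ r * p) ↔
      (StrictMono (height π u) ∧ ∀ j, height π u j < p + n - des π) := by
  have hmono : StrictMono (fun j => toLex (u j, π.perm j)) ↔ StrictMono (height π u) := by
    simp only [Fin.strictMono_iff_lt_of_val_add_one_eq]
    exact forall₂_congr fun i j => forall_congr' (toLex_lt_toLex_iff_height_lt hu)
  rw [hmono]
  refine and_congr_right fun hh => ?_
  rcases Nat.eq_zero_or_pos n with rfl | hn
  · exact ⟨fun _ j => j.elim0, fun _ j => j.elim0⟩
  set last : Fin n := ⟨n - 1, by omega⟩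
  have hle : ∀ j, j ≤ last := fun j => Fin.le_def.mpr (by simp [last]; omega)
  have hlast := le_mul_iff_height_lt hu (show (last : ℕ) + 1 = n by simp [last]; omega) p
  refine ⟨fun h j => (hh.monotone (hle j)).trans_lt (hlast.mp (h last)), fun h j => ?_⟩
  have hlex := Prod.Lex.toLex_le_toLex.mp ((hmono.mpr hh).monotone (hle j))
  exact (hlex.elim le_of_lt (·.1.le)).trans (hlast.mpr (h last))

theorem std_eq_iff_height {p : ℕ} (F : Fin n → Fin (r * p + 1)) :
    std r F = π ↔ (∀ j, (F (π.perm j) : ℕ) % r = (π.col j).val) ∧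
      StrictMono (height π fun j => F (π.perm j)) ∧
        ∀ j, height π (fun j => F (π.perm j)) j < p + n - des π := by
  have hcol : (∀ j, ((F (π.perm j) : ℕ) : ZMod r) = π.col j) ↔
      ∀ j, (F (π.perm j) : ℕ) % r = (π.col j).val := by
    simp only [← ZMod.val_natCast, ZMod.val_injective r |>.eq_iff]
  rw [std_eq_iff, hcol, and_comm]
  refine and_congr_right fun hu => ?_
  rw [← strictMono_toLex_and_le_mul_iff hu p]
  exact (and_iff_left fun j => Nat.lt_succ_iff.mp (F _).2).symm

theorem wordOfHeight_mod (e : Fin n → ℕ) (j : Fin n) :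
    wordOfHeight π e j % r = (π.col j).val := by
  rw [wordOfHeight, Nat.add_mul_mod_self_left, Nat.mod_eq_of_lt (ZMod.val_lt _)]

theorem height_wordOfHeight {e : Fin n → ℕ} (he : ∀ j : Fin n, (j : ℕ) ≤ e j) :
    height π (wordOfHeight π e) = e := by
  funext j
  rw [height, wordOfHeight, Nat.add_mul_div_left _ _ (Nat.pos_of_neZero r),
    Nat.div_eq_of_lt (ZMod.val_lt _)]
  have := desBefore_le π j
  have := he j
  omega

theorem wordOfHeight_le_mul {p : ℕ} (e : Fin n ↪o Fin (p + n - des π)) (j : Fin n) :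
    wordOfHeight π (fun j => e j) j ≤ r * p := by
  have he : StrictMono fun j => (e j : ℕ) := e.strictMono
  refine ((strictMono_toLex_and_le_mul_iff (wordOfHeight_mod _) p).mpr ?_).2 j
  rw [height_wordOfHeight (Fin.val_le_of_strictMono he)]
  exact ⟨he, fun j => (e j).2⟩

variable (π) in
def wordOfEmbedding {p : ℕ} (e : Fin n ↪o Fin (p + n - des π)) (v : Fin n) : Fin (r * p + 1) :=
  ⟨wordOfHeight π (fun j => e j) (π.perm⁻¹ v), Nat.lt_succ_of_le (wordOfHeight_le_mul e _)⟩

theorem wordOfEmbedding_perm {p : ℕ} (e : Fin n ↪o Fin (p + n - des π)) (j : Fin n) :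
    (wordOfEmbedding π e (π.perm j) : ℕ) = wordOfHeight π (fun j => e j) j := by
  simp [wordOfEmbedding]

theorem std_wordOfEmbedding {p : ℕ} (e : Fin n ↪o Fin (p + n - des π)) :
    std r (wordOfEmbedding π e) = π := by
  have he : StrictMono fun j => (e j : ℕ) := e.strictMono
  simp only [std_eq_iff_height, wordOfEmbedding_perm,
    height_wordOfHeight (Fin.val_le_of_strictMono he)]
  exact ⟨wordOfHeight_mod _, he, fun j => (e j).2⟩

variable (π) in
def fiberEquiv (p : ℕ) :
    {F : Fin n → Fin (r * p + 1) // std r F = π} ≃ (Fin n ↪o Fin (p + n - des π)) where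
  toFun F :=
    have hF := (std_eq_iff_height F.1).mp F.2
    OrderEmbedding.ofStrictMono (fun j => ⟨_, hF.2.2 j⟩) fun _ _ hij => hF.2.1 hij
  invFun e := ⟨wordOfEmbedding π e, std_wordOfEmbedding e⟩
  left_inv F := by
    have hu := ((std_eq_iff_height F.1).mp F.2).1
    ext v
    show wordOfHeight π (height π fun j => (F.1 (π.perm j) : ℕ)) (π.perm⁻¹ v) = F.1 v
    rw [wordOfHeight_height hu]
    simp
  right_inv e := by
    have he : StrictMono fun j => (e j : ℕ) := e.strictMono
    ext j
    simp [wordOfEmbedding_perm, height_wordOfHeight (Fin.val_le_of_strictMono he)]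

end Descents

variable [NeZero r]

theorem card_std_eq (π : ColoredPerm r n) (p : ℕ) :
    #{F : Fin n → Fin (r * p + 1) | std r F = π} = (p + n - des π).choose n := by
  rw [← Fintype.card_subtype, Fintype.card_eq_nat_card, Nat.card_congr (fiberEquiv π p),
    Nat.card_congr Set.powersetCard.ofFinEmbEquiv, Set.powersetCard.card, Nat.card_eq_fintype_card,
    Fintype.card_fin]

theorem wordSum_eq_sum_choose_smul (p : ℕ) :
    wordSum r n (r * p + 1) =
      ∑ π : ColoredPerm r n, ((p + n - des π).choose n : ℚ) • MonoidAlgebra.of ℚ _ π := by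
  rw [wordSum, ← sum_fiberwise univ (std r)]
  refine sum_congr rfl fun π _ => ?_
  rw [sum_congr rfl fun F hF => by rw [(mem_filter.mp hF).2], sum_const, card_std_eq,
    Nat.cast_smul_eq_nsmul]

end ColoredPerm

theorem eval_idemPoly (r n p d : ℕ) [NeZero r] (hd : d ≤ n) :
    (idemPoly r n d).eval ((r * p + 1 : ℕ) : ℚ) = ((p + n - d).choose n : ℚ) := by
  have hr : (r : ℚ) ≠ 0 := Nat.cast_ne_zero.mpr (NeZero.ne r)
  have hfactor : ∀ m : ℕ,
      (r : ℚ)⁻¹ * ((r * p + 1 : ℕ) - 1) - d + m = (p + n - d : ℕ) - n + m := fun m => by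
    rw [Nat.cast_sub (by omega)]
    push_cast
    field_simp
    ring
  simp only [idemPoly, eval_mul, eval_C, eval_prod, eval_add, eval_sub, eval_X, eval_one,
    hfactor, prod_Icc_sub_add_eq_prod_range, Nat.cast_choose_eq_descPochhammer_div,
    descPochhammer_eval_eq_prod_range]
  ring

theorem natDegree_idemPoly_le (r n d : ℕ) : (idemPoly r n d).natDegree ≤ n := by
  refine (natDegree_C_mul_le _ _).trans <| (natDegree_prod_le _ _).trans <|
    (sum_le_sum fun m _ => (?_ : _ ≤ 1)).trans (by simp)
  compute_degree

theorem sum_eval_idemPoly_smul (r n : ℕ) [NeZero r] (x : ℚ) :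
    ∑ π : ColoredPerm r n, (idemPoly r n (des π)).eval x • MonoidAlgebra.of ℚ _ π =
      ∑ k ∈ range (n + 1), x ^ k • eulerianIdem r n k := by
  simp_rw [eulerianIdem, smul_sum, smul_smul, fun π : ColoredPerm r n =>
    eval_eq_sum_range' ((natDegree_idemPoly_le r n (des π)).trans_lt n.lt_succ_self) x, sum_smul]
  rw [sum_comm]
  exact sum_congr rfl fun k _ => sum_congr rfl fun π _ => by rw [mul_comm]

theorem wordSum_eq_sum_pow_smul_eulerianIdem (r n p : ℕ) [NeZero r] :
    wordSum r n (r * p + 1) =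
      ∑ k ∈ range (n + 1), ((r * p + 1 : ℕ) : ℚ) ^ k • eulerianIdem r n k := by
  simp only [wordSum_eq_sum_choose_smul, ← sum_eval_idemPoly_smul,
    eval_idemPoly r n p _ (des_le _)]

theorem eulerianIdem_orthogonal_idempotent_general (r n : ℕ) [NeZero r] :
    (∀ i ≤ n, ∀ j ≤ n, i ≠ j → eulerianIdem r n i * eulerianIdem r n j = 0) ∧
      (∀ i ≤ n, eulerianIdem r n i * eulerianIdem r n i = eulerianIdem r n i) := by
  have hT : (Set.range fun p : ℕ => ((r * p + 1 : ℕ) : ℚ)).Infinite :=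
    Set.infinite_range_of_injective fun p q h => by
      simpa [NeZero.ne r] using (Nat.cast_injective h : r * p + 1 = r * q + 1)
  have he : OrthogonalIdempotents fun i : Fin (n + 1) => eulerianIdem r n i := by
    refine orthogonalIdempotents_of_sum_pow_smul_mul hT ?_
    rintro _ ⟨p, rfl⟩ _ ⟨q, rfl⟩
    rw [← wordSum_eq_sum_pow_smul_eulerianIdem, ← wordSum_eq_sum_pow_smul_eulerianIdem,
      wordSum_mul (by simp), show (r * q + 1) * (r * p + 1) = r * (r * q * p + q + p) + 1 by ring,
      wordSum_eq_sum_pow_smul_eulerianIdem]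
    refine sum_congr rfl fun k _ => ?_
    push_cast
    ring_nf
  exact ⟨fun i hi j hj hij =>
      he.ortho (i := ⟨i, by omega⟩) (j := ⟨j, by omega⟩) (by simpa using hij),
    fun i hi => he.idem ⟨i, by omega⟩⟩

/-- The `c_i`, for `0 ≤ i ≤ n`, are pairwise orthogonal idempotents. -/
theorem eulerianIdem_orthogonal_idempotent (r n : ℕ) [NeZero r] (hn : 1 ≤ n) :
    (∀ i ≤ n, ∀ j ≤ n, i ≠ j → eulerianIdem r n i * eulerianIdem r n j = 0) ∧
      (∀ i ≤ n, eulerianIdem r n i * eulerianIdem r n i = eulerianIdem r n i) :=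
  eulerianIdem_orthogonal_idempotent_general r n
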